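/- Let (R, +, ·) be a hyperring and e ∈ R. The transitive closure (λ^e_×)* of the relation λ^e_× is a strongly regular equivalence relation on both (R, +) and (R, ·). -/

import Mathlib

/-- A hyperoperation on `H`: every pair maps to a nonempty subset. -/
structure Hyperop (H : Type*) where
  op : H → H → Set H
  op_nonempty : ∀ x y, (op x y).Nonempty

namespace Hyperop

variable {H : Type*}

/-- Extension of the hyperoperation to subsets. -/
def sop (h : Hyperop H) (A B : Set H) : Set H := ⋃ a ∈ A, ⋃ b ∈ B, h.op a b

/-- Associativity of a hyperoperation (on sets). -/
def IsAssoc (h : Hyperop H) : Prop :=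
  ∀ x y z : H, h.sop (h.op x y) {z} = h.sop {x} (h.op y z)

/-- Reproduction axiom: `x ∘ H = H ∘ x = H`. -/
def IsReproductive (h : Hyperop H) : Prop :=
  ∀ x y : H, (∃ u, y ∈ h.op x u) ∧ (∃ v, y ∈ h.op v x)

/-- A relation `T` is strongly regular (on both sides) w.r.t. `h`. -/
def StronglyRegular (h : Hyperop H) (T : H → H → Prop) : Prop :=
  ∀ x y, T x y → ∀ a : H,
    (∀ u ∈ h.op a x, ∀ v ∈ h.op a y, T u v) ∧
    (∀ u ∈ h.op x a, ∀ v ∈ h.op y a, T u v)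

/-- `h.foldl x l` : the set `x ∘ l₁ ∘ ⋯ ∘ lₖ`. -/
def foldl (h : Hyperop H) : H → List H → Set H
  | x, [] => {x}
  | x, y :: l => ⋃ z ∈ h.op x y, h.foldl z l

/-- Hyper-"product" of a nonempty list of elements (empty list gives `∅`). -/
def listProd (h : Hyperop H) : List H → Set H
  | [] => ∅
  | x :: l => h.foldl x l

/-- Fold a list of subsets onto a subset. -/
def setFold (h : Hyperop H) : Set H → List (Set H) → Set H
  | A, [] => A
  | A, B :: l => h.setFold (h.sop A B) l

end Hyperop

/-- `l'` is obtained from `l` by inserting one consecutive block of copies of `e`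
(or is equal to `l`). -/
def InsertBlock {α : Type*} (e : α) (l l' : List α) : Prop :=
  l' = l ∨ ∃ (p q : List α) (k : ℕ), 1 ≤ k ∧ l = p ++ q ∧ l' = p ++ List.replicate k e ++ q

/-- A hyperring: `(R, +)` a hypergroup, `(R, ·)` a semi-hypergroup,
with two-sided distributivity. -/
structure Hyperring (R : Type*) where
  add : Hyperop R
  mul : Hyperop R
  add_assoc : add.IsAssoc
  add_repro : add.IsReproductive
  mul_assoc : mul.IsAssoc
  left_distrib : ∀ x y z : R, mul.sop {x} (add.op y z) = add.sop (mul.op x y) (mul.op x z)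
  right_distrib : ∀ x y z : R, mul.sop (add.op y z) {x} = add.sop (mul.op y x) (mul.op z x)

namespace Hyperring

variable {R : Type*}

/-- Sum of products: `ll` is a list of lists; each inner list is multiplied,
the results are added up. -/
def SOP (S : Hyperring R) : List (List R) → Set R
  | [] => ∅
  | l :: t => S.add.setFold (S.mul.listProd l) (t.map S.mul.listProd)

/-- A valid sum-of-products expression: nonempty list of nonempty lists. -/
def ValidExpr (S : Hyperring R) (ll : List (List R)) : Prop :=
  ll ≠ [] ∧ ∀ l ∈ ll, l ≠ []

/-- The Vougiouklis relation `Γ`. -/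
def gamma (S : Hyperring R) (x y : R) : Prop :=
  ∃ ll, S.ValidExpr ll ∧ x ∈ S.SOP ll ∧ y ∈ S.SOP ll

/-- The relation `α₊` : permuting the summands. -/
def alphaPlus (S : Hyperring R) (x y : R) : Prop :=
  ∃ ll ll', S.ValidExpr ll ∧ ll.Perm ll' ∧ x ∈ S.SOP ll ∧ y ∈ S.SOP ll'

/-- The relation `α×` : permuting the factors inside each product. -/
def alphaTimes (S : Hyperring R) (x y : R) : Prop :=
  ∃ ll ll', S.ValidExpr ll ∧ List.Forall₂ List.Perm ll ll' ∧ x ∈ S.SOP ll ∧ y ∈ S.SOP ll'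

/-- The Davvaz–Vougiouklis relation `α` : permuting factors inside each
product and then permuting the summands. -/
def alpha (S : Hyperring R) (x y : R) : Prop :=
  ∃ ll mid ll', S.ValidExpr ll ∧ List.Forall₂ List.Perm ll mid ∧ mid.Perm ll' ∧
    x ∈ S.SOP ll ∧ y ∈ S.SOP ll'

/-- Condition `𝔓ₑ` : each product of the second expression is obtained from the
corresponding product of the first by inserting a block of copies of `e`. -/
def CondP (S : Hyperring R) (e : R) (ll ll' : List (List R)) : Prop :=
  List.Forall₂ (InsertBlock e) ll ll'

/-- The relation `(λ^e_×)ₘ`. -/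
def lamTimesN (S : Hyperring R) (e : R) (m : ℕ) (x y : R) : Prop :=
  ∃ ll ll', ll.length = m ∧ S.ValidExpr ll ∧ S.CondP e ll ll' ∧
    ((x ∈ S.SOP ll ∧ y ∈ S.SOP ll') ∨ (x ∈ S.SOP ll' ∧ y ∈ S.SOP ll))

/-- The relation `λ^e_×`. -/
def lamTimes (S : Hyperring R) (e : R) (x y : R) : Prop :=
  ∃ m, 1 ≤ m ∧ S.lamTimesN e m x y

/-- The relation `λₑ = λ^e_× ∪ α₊`. -/
def lam (S : Hyperring R) (e : R) (x y : R) : Prop :=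
  S.lamTimes e x y ∨ S.alphaPlus x y

/-- The relation `Λₑ = λ^e_× ∪ α`. -/
def Lam (S : Hyperring R) (e : R) (x y : R) : Prop :=
  S.lamTimes e x y ∨ S.alpha x y

/-- `M` is a `λₑ`-part. -/
def IsLamPart (S : Hyperring R) (e : R) (M : Set R) : Prop :=
  (∀ ll ll', S.ValidExpr ll → ll.Perm ll' → (S.SOP ll ∩ M).Nonempty → S.SOP ll' ⊆ M) ∧
  (∀ ll ll', S.ValidExpr ll → (S.CondP e ll ll' ∨ S.CondP e ll' ll) →
      (S.SOP ll ∩ M).Nonempty → S.SOP ll' ⊆ M)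

/-- A `λₑ`-strong hyperring. -/
def LamStrong (S : Hyperring R) (e : R) : Prop :=
  (∀ x y, Relation.TransGen (S.lam e) x y →
      (S.mul.op x e ∩ S.mul.op y e).Nonempty ∧ (S.mul.op e x ∩ S.mul.op e y).Nonempty) ∧
  (∀ x z, z ∈ S.mul.op x e → x ∈ S.mul.op z e) ∧
  (∀ x z, z ∈ S.mul.op e x → x ∈ S.mul.op e z)

end Hyperring

/-!
Prepending a summand `a`, appending one, or multiplying every product by `a` on the left or on
the right sends two expressions in condition `𝔓ₑ` to two expressions again in condition `𝔓ₑ`,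
and, by associativity and distributivity, it acts on their hypersums as `a ∘ -` or `- ∘ a`.
Hence `λ^e_×` itself is strongly regular for `+` and `·`. It is reflexive and symmetric, and
strong regularity passes to the transitive closure because hyperoperations are nonempty-valued.
-/

namespace Hyperop

variable {H : Type*} (h : Hyperop H)

@[simp]
lemma mem_sop {A B : Set H} {u : H} : u ∈ h.sop A B ↔ ∃ a ∈ A, ∃ b ∈ B, u ∈ h.op a b := by
  simp [sop]

lemma mem_sop_singleton_left {a u : H} {B : Set H} :
    u ∈ h.sop {a} B ↔ ∃ b ∈ B, u ∈ h.op a b := by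
  simp

lemma mem_sop_singleton_right {A : Set H} {b u : H} :
    u ∈ h.sop A {b} ↔ ∃ a ∈ A, u ∈ h.op a b := by
  simp

lemma sop_singleton_left (a : H) (B : Set H) : h.sop {a} B = ⋃ b ∈ B, h.op a b := by
  simp [sop]

lemma sop_singleton_right (A : Set H) (b : H) : h.sop A {b} = ⋃ a ∈ A, h.op a b := by
  simp [sop]

lemma sop_biUnion_left {ι : Type*} (s : Set ι) (f : ι → Set H) (B : Set H) :
    h.sop (⋃ i ∈ s, f i) B = ⋃ i ∈ s, h.sop (f i) B := by
  ext; simp only [mem_sop, Set.mem_iUnion]; grind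

lemma sop_biUnion_right {ι : Type*} (A : Set H) (s : Set ι) (f : ι → Set H) :
    h.sop A (⋃ i ∈ s, f i) = ⋃ i ∈ s, h.sop A (f i) := by
  ext; simp only [mem_sop, Set.mem_iUnion]; grind

lemma sop_assoc (ha : h.IsAssoc) (A B C : Set H) :
    h.sop (h.sop A B) C = h.sop A (h.sop B C) := by
  ext u
  simp only [mem_sop]
  constructor
  · rintro ⟨t, ⟨x, hx, y, hy, ht⟩, z, hz, hu⟩
    have hu' : u ∈ h.sop {x} (h.op y z) := ha x y z ▸ h.mem_sop.2 ⟨t, ht, z, rfl, hu⟩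
    obtain ⟨s, hs, hu'⟩ := h.mem_sop_singleton_left.1 hu'
    exact ⟨x, hx, s, ⟨y, hy, z, hz, hs⟩, hu'⟩
  · rintro ⟨x, hx, s, ⟨y, hy, z, hz, hs⟩, hu⟩
    have hu' : u ∈ h.sop (h.op x y) {z} := ha x y z ▸ h.mem_sop.2 ⟨x, rfl, s, hs, hu⟩
    obtain ⟨t, ht, hu'⟩ := h.mem_sop_singleton_right.1 hu'
    exact ⟨t, ⟨x, hx, y, hy, ht⟩, z, hz, hu'⟩

lemma setFold_append (A : Set H) (l : List (Set H)) (B : Set H) :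
    h.setFold A (l ++ [B]) = h.sop (h.setFold A l) B := by
  induction l generalizing A with
  | nil => rfl
  | cons C t ih => exact ih (h.sop A C)

lemma setFold_sop_singleton_left (ha : h.IsAssoc) (a : H) (A : Set H) (l : List (Set H)) :
    h.setFold (h.sop {a} A) l = h.sop {a} (h.setFold A l) := by
  induction l generalizing A with
  | nil => rfl
  | cons B t ih =>
    change h.setFold (h.sop (h.sop {a} A) B) t = h.sop {a} (h.setFold (h.sop A B) t)
    rw [h.sop_assoc ha, ih]

lemma biUnion_foldl (A : Set H) (l : List H) :
    ⋃ x ∈ A, h.foldl x l = h.setFold A (l.map ({·})) := by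
  induction l generalizing A with
  | nil => simp [foldl, setFold]
  | cons y l ih =>
    change ⋃ x ∈ A, ⋃ z ∈ h.op x y, h.foldl z l = h.setFold (h.sop A {y}) (l.map ({·}))
    rw [← ih, sop_singleton_right]
    simp only [Set.biUnion_iUnion]

lemma listProd_cons_eq_setFold (x : H) (l : List H) :
    h.listProd (x :: l) = h.setFold {x} (l.map ({·})) := by
  rw [← biUnion_foldl, Set.biUnion_singleton]
  rfl

lemma listProd_cons (ha : h.IsAssoc) (a : H) {l : List H} (hl : l ≠ []) :
    h.listProd (a :: l) = h.sop {a} (h.listProd l) := by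
  obtain ⟨y, t, rfl⟩ := List.exists_cons_of_ne_nil hl
  rw [listProd_cons_eq_setFold, listProd_cons_eq_setFold, List.map_cons]
  exact h.setFold_sop_singleton_left ha a {y} _

lemma listProd_append (a : H) {l : List H} (hl : l ≠ []) :
    h.listProd (l ++ [a]) = h.sop (h.listProd l) {a} := by
  obtain ⟨y, t, rfl⟩ := List.exists_cons_of_ne_nil hl
  rw [List.cons_append, listProd_cons_eq_setFold, listProd_cons_eq_setFold, List.map_append,
    List.map_singleton, setFold_append]

lemma StronglyRegular.transGen {T : H → H → Prop} (hT : h.StronglyRegular T) :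
    h.StronglyRegular (Relation.TransGen T) := by
  intro x y hxy a
  induction hxy with
  | single hxy =>
    exact ⟨fun u hu v hv => .single ((hT _ _ hxy a).1 u hu v hv),
      fun u hu v hv => .single ((hT _ _ hxy a).2 u hu v hv)⟩
  | @tail b c _ hbc ih =>
    obtain ⟨w, hw⟩ := h.op_nonempty a b
    obtain ⟨w', hw'⟩ := h.op_nonempty b a
    exact ⟨fun u hu v hv => (ih.1 u hu w hw).tail ((hT _ _ hbc a).1 w hw v hv),
      fun u hu v hv => (ih.2 u hu w' hw').tail ((hT _ _ hbc a).2 w' hw' v hv)⟩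

end Hyperop

lemma InsertBlock.refl {α : Type*} (e : α) (l : List α) : InsertBlock e l l := Or.inl rfl

lemma InsertBlock.ne_nil {α : Type*} {e : α} {l l' : List α} (hb : InsertBlock e l l')
    (hl : l ≠ []) : l' ≠ [] := by
  rcases hb with rfl | ⟨p, q, k, hk, rfl, rfl⟩
  · exact hl
  · obtain ⟨k, rfl⟩ := Nat.exists_eq_add_of_le' hk
    simp [List.replicate_succ]

lemma InsertBlock.cons {α : Type*} {e : α} {l l' : List α} (a : α) (hb : InsertBlock e l l') :
    InsertBlock e (a :: l) (a :: l') := by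
  rcases hb with rfl | ⟨p, q, k, hk, rfl, rfl⟩
  · exact .refl e _
  · exact Or.inr ⟨a :: p, q, k, hk, rfl, rfl⟩

lemma InsertBlock.append_singleton {α : Type*} {e : α} {l l' : List α} (a : α)
    (hb : InsertBlock e l l') : InsertBlock e (l ++ [a]) (l' ++ [a]) := by
  rcases hb with rfl | ⟨p, q, k, hk, rfl, rfl⟩
  · exact .refl e _
  · exact Or.inr ⟨p, q ++ [a], k, hk, by simp, by simp⟩

namespace Hyperring

variable {R : Type*} (S : Hyperring R)

lemma left_distrib_sop (a : R) (A B : Set R) :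
    S.mul.sop {a} (S.add.sop A B) = S.add.sop (S.mul.sop {a} A) (S.mul.sop {a} B) :=
  calc S.mul.sop {a} (⋃ b ∈ A, ⋃ c ∈ B, S.add.op b c)
      = ⋃ b ∈ A, ⋃ c ∈ B, S.add.sop (S.mul.op a b) (S.mul.op a c) := by
        simp only [Hyperop.sop_biUnion_right, S.left_distrib]
    _ = S.add.sop (S.mul.sop {a} A) (S.mul.sop {a} B) := by
        rw [Hyperop.sop_singleton_left, Hyperop.sop_singleton_left, Hyperop.sop_biUnion_left]
        simp only [Hyperop.sop_biUnion_right]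

lemma right_distrib_sop (a : R) (A B : Set R) :
    S.mul.sop (S.add.sop A B) {a} = S.add.sop (S.mul.sop A {a}) (S.mul.sop B {a}) :=
  calc S.mul.sop (⋃ b ∈ A, ⋃ c ∈ B, S.add.op b c) {a}
      = ⋃ b ∈ A, ⋃ c ∈ B, S.add.sop (S.mul.op b a) (S.mul.op c a) := by
        simp only [Hyperop.sop_biUnion_left, S.right_distrib]
    _ = S.add.sop (S.mul.sop A {a}) (S.mul.sop B {a}) := by
        rw [Hyperop.sop_singleton_right, Hyperop.sop_singleton_right, Hyperop.sop_biUnion_left]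
        simp only [Hyperop.sop_biUnion_right]

lemma left_distrib_setFold (a : R) (A : Set R) (l : List (Set R)) :
    S.add.setFold (S.mul.sop {a} A) (l.map (S.mul.sop {a})) =
      S.mul.sop {a} (S.add.setFold A l) := by
  induction l generalizing A with
  | nil => rfl
  | cons B t ih =>
    change S.add.setFold (S.add.sop (S.mul.sop {a} A) (S.mul.sop {a} B)) _ = _
    rw [← S.left_distrib_sop, ih]
    rfl

lemma right_distrib_setFold (a : R) (A : Set R) (l : List (Set R)) :
    S.add.setFold (S.mul.sop A {a}) (l.map (S.mul.sop · {a})) =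
      S.mul.sop (S.add.setFold A l) {a} := by
  induction l generalizing A with
  | nil => rfl
  | cons B t ih =>
    change S.add.setFold (S.add.sop (S.mul.sop A {a}) (S.mul.sop B {a})) _ = _
    rw [← S.right_distrib_sop, ih]
    rfl

lemma SOP_cons_singleton (a : R) {ll : List (List R)} (hll : ll ≠ []) :
    S.SOP ([a] :: ll) = S.add.sop {a} (S.SOP ll) := by
  obtain ⟨l, t, rfl⟩ := List.exists_cons_of_ne_nil hll
  exact S.add.setFold_sop_singleton_left S.add_assoc a _ _

lemma SOP_append_singleton (a : R) {ll : List (List R)} (hll : ll ≠ []) :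
    S.SOP (ll ++ [[a]]) = S.add.sop (S.SOP ll) {a} := by
  obtain ⟨l, t, rfl⟩ := List.exists_cons_of_ne_nil hll
  change S.add.setFold _ ((t ++ [[a]]).map S.mul.listProd) = _
  rw [List.map_append]
  exact S.add.setFold_append _ _ {a}

lemma SOP_map_cons (a : R) {ll : List (List R)} (hv : S.ValidExpr ll) :
    S.SOP (ll.map (a :: ·)) = S.mul.sop {a} (S.SOP ll) := by
  obtain ⟨hne, hall⟩ := hv
  obtain ⟨l, t, rfl⟩ := List.exists_cons_of_ne_nil hne
  have hprod : ∀ l' ∈ l :: t, S.mul.listProd (a :: l') = S.mul.sop {a} (S.mul.listProd l') :=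
    fun l' hl' => S.mul.listProd_cons S.mul_assoc a (hall l' hl')
  have hmap : (t.map (a :: ·)).map S.mul.listProd =
      (t.map S.mul.listProd).map (S.mul.sop {a}) := by
    simp only [List.map_map]
    exact List.map_congr_left fun l' hl' => hprod l' (.tail l hl')
  change S.add.setFold (S.mul.listProd (a :: l)) ((t.map (a :: ·)).map S.mul.listProd) = _
  rw [hmap, hprod l (.head t)]
  exact S.left_distrib_setFold a _ _

lemma SOP_map_append (a : R) {ll : List (List R)} (hv : S.ValidExpr ll) :
    S.SOP (ll.map (· ++ [a])) = S.mul.sop (S.SOP ll) {a} := by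
  obtain ⟨hne, hall⟩ := hv
  obtain ⟨l, t, rfl⟩ := List.exists_cons_of_ne_nil hne
  have hprod : ∀ l' ∈ l :: t, S.mul.listProd (l' ++ [a]) = S.mul.sop (S.mul.listProd l') {a} :=
    fun l' hl' => S.mul.listProd_append a (hall l' hl')
  have hmap : (t.map (· ++ [a])).map S.mul.listProd =
      (t.map S.mul.listProd).map (S.mul.sop · {a}) := by
    simp only [List.map_map]
    exact List.map_congr_left fun l' hl' => hprod l' (.tail l hl')
  change S.add.setFold (S.mul.listProd (l ++ [a])) ((t.map (· ++ [a])).map S.mul.listProd) = _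
  rw [hmap, hprod l (.head t)]
  exact S.right_distrib_setFold a _ _

section

variable {S}

lemma ValidExpr.of_condP {e : R} {ll ll' : List (List R)} (hv : S.ValidExpr ll)
    (hc : S.CondP e ll ll') : S.ValidExpr ll' := by
  refine ⟨?_, ?_⟩
  · rintro rfl
    exact hv.1 (List.forall₂_nil_right_iff.1 hc)
  · obtain ⟨-, hv⟩ := hv
    induction hc with
    | nil => simp
    | cons hb _ ih =>
      simp only [List.mem_cons, forall_eq_or_imp] at hv ⊢
      exact ⟨hb.ne_nil hv.1, ih hv.2⟩

lemma ValidExpr.cons_singleton (a : R) {ll : List (List R)} (hv : S.ValidExpr ll) :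
    S.ValidExpr ([a] :: ll) :=
  ⟨List.cons_ne_nil _ _, by simpa using hv.2⟩

lemma ValidExpr.append_singleton (a : R) {ll : List (List R)} (hv : S.ValidExpr ll) :
    S.ValidExpr (ll ++ [[a]]) :=
  ⟨by simp, by simpa [or_imp, forall_and] using hv.2⟩

lemma ValidExpr.map_cons (a : R) {ll : List (List R)} (hv : S.ValidExpr ll) :
    S.ValidExpr (ll.map (a :: ·)) :=
  ⟨by simpa using hv.1, by simp⟩

lemma ValidExpr.map_append (a : R) {ll : List (List R)} (hv : S.ValidExpr ll) :
    S.ValidExpr (ll.map (· ++ [a])) :=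
  ⟨by simpa using hv.1, by simp⟩

end

lemma lamTimes_refl (e x : R) : S.lamTimes e x x :=
  ⟨1, le_rfl, [[x]], [[x]], rfl, ⟨by simp, by simp⟩, .cons (.refl e [x]) .nil,
    .inl ⟨Set.mem_singleton x, Set.mem_singleton x⟩⟩

lemma lamTimes_symm {e x y : R} (h : S.lamTimes e x y) : S.lamTimes e y x := by
  obtain ⟨m, hm, ll, ll', hlen, hv, hc, hxy⟩ := h
  exact ⟨m, hm, ll, ll', hlen, hv, hc, hxy.symm.imp And.symm And.symm⟩

lemma lamTimes_map {e x y u v : R} (h : S.lamTimes e x y)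
    (F : List (List R) → List (List R))
    (hF_valid : ∀ ll, S.ValidExpr ll → S.ValidExpr (F ll))
    (hF_condP : ∀ ll ll', S.CondP e ll ll' → S.CondP e (F ll) (F ll'))
    (hxu : ∀ ll, S.ValidExpr ll → x ∈ S.SOP ll → u ∈ S.SOP (F ll))
    (hyv : ∀ ll, S.ValidExpr ll → y ∈ S.SOP ll → v ∈ S.SOP (F ll)) :
    S.lamTimes e u v := by
  obtain ⟨-, -, ll, ll', -, hv, hc, hxy⟩ := h
  have hv' := hv.of_condP hc
  refine ⟨(F ll).length, List.length_pos_iff.2 (hF_valid ll hv).1, F ll, F ll', rfl,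
    hF_valid ll hv, hF_condP ll ll' hc, ?_⟩
  exact hxy.imp (fun h => ⟨hxu ll hv h.1, hyv ll' hv' h.2⟩)
    (fun h => ⟨hxu ll' hv' h.1, hyv ll hv h.2⟩)

lemma stronglyRegular_add_lamTimes (e : R) : S.add.StronglyRegular (S.lamTimes e) := by
  intro x y hxy a
  constructor <;> intro u hu v hv
  · refine S.lamTimes_map hxy ([a] :: ·) (fun _ h => h.cons_singleton a)
      (fun _ _ hc => .cons (.refl e [a]) hc) (fun ll hll hx => ?_) (fun ll hll hy => ?_) <;>
      rw [S.SOP_cons_singleton a hll.1]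
    exacts [S.add.mem_sop_singleton_left.2 ⟨x, hx, hu⟩,
      S.add.mem_sop_singleton_left.2 ⟨y, hy, hv⟩]
  · refine S.lamTimes_map hxy (· ++ [[a]]) (fun _ h => h.append_singleton a)
      (fun _ _ hc => List.rel_append hc (.cons (.refl e [a]) .nil))
      (fun ll hll hx => ?_) (fun ll hll hy => ?_) <;>
      rw [S.SOP_append_singleton a hll.1]
    exacts [S.add.mem_sop_singleton_right.2 ⟨x, hx, hu⟩,
      S.add.mem_sop_singleton_right.2 ⟨y, hy, hv⟩]

lemma stronglyRegular_mul_lamTimes (e : R) : S.mul.StronglyRegular (S.lamTimes e) := by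
  intro x y hxy a
  constructor <;> intro u hu v hv
  · refine S.lamTimes_map hxy (List.map (a :: ·)) (fun _ h => h.map_cons a)
      (fun _ _ hc => List.rel_map (fun _ _ hb => hb.cons a) hc)
      (fun ll hll hx => ?_) (fun ll hll hy => ?_) <;>
      rw [S.SOP_map_cons a hll]
    exacts [S.mul.mem_sop_singleton_left.2 ⟨x, hx, hu⟩,
      S.mul.mem_sop_singleton_left.2 ⟨y, hy, hv⟩]
  · refine S.lamTimes_map hxy (List.map (· ++ [a])) (fun _ h => h.map_append a)
      (fun _ _ hc => List.rel_map (fun _ _ hb => hb.append_singleton a) hc)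
      (fun ll hll hx => ?_) (fun ll hll hy => ?_) <;>
      rw [S.SOP_map_append a hll]
    exacts [S.mul.mem_sop_singleton_right.2 ⟨x, hx, hu⟩,
      S.mul.mem_sop_singleton_right.2 ⟨y, hy, hv⟩]

end Hyperring

/-- `(λ^e_×)*` is a strongly regular equivalence relation on both
`(R, +)` and `(R, ·)`. -/
theorem stmt10 {R : Type*} (S : Hyperring R) (e : R) :
    Equivalence (Relation.TransGen (S.lamTimes e)) ∧
    S.add.StronglyRegular (Relation.TransGen (S.lamTimes e)) ∧
    S.mul.StronglyRegular (Relation.TransGen (S.lamTimes e)) := by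
  refine ⟨⟨fun x => .single (S.lamTimes_refl e x), fun h => ?_, .trans⟩,
    (S.stronglyRegular_add_lamTimes e).transGen, (S.stronglyRegular_mul_lamTimes e).transGen⟩
  exact Relation.transGen_swap.1 (Relation.TransGen.mono (fun _ _ => S.lamTimes_symm) _ _ h)
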